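/- arXiv:math/0309279 — 2 statements merged into one kernel-verified Lean document; each statement's English description precedes it below -/
import Mathlib

section
/- Fix nonzero complex quasiperiods ω1, ω2 with Im(ω1/ω2) > 0, and fix u ∈ ℂ such that e^{2πi u/ω2} ∉ {q^{−j} : j ≥ 0} and e^{−2πi u/ω1} ∉ {q̃^{−j} r^{−k−1}} (so that both sides are defined). Then, as ω3 tends to infinity in such a way that Im(ω3/ω1) → +∞ and Im(ω3/ω2) → +∞ (so p = e^{2πi ω3/ω2} → 0 and r = e^{2πi ω3/ω1} → 0), the reciprocal 1/G(u; ω1, ω2, ω3) of the modified elliptic gamma function converges to the double sine function S(u; ω1, ω2) = (e^{2πi u/ω2}; q)_∞ / (e^{2πi u/ω1} q̃; q̃)_∞. -/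
/-!
Each of the four factors of `G` is a double product `∏_{j,k} (1 - a x^j y^k)` with `|x| < 1` and
`y ∈ {p, r}`. For the two factors whose coefficient `a` carries no power of `p` or `r`, the row
`k = 0` is a single Pochhammer symbol independent of `ω3`, and splitting it off gives
`G = (e^{2πi u/ω1} q̃; q̃)_∞ / (e^{2πi u/ω2}; q)_∞ · E`, where `E` is a ratio of double products
whose coefficients tend to `0` with `p` and `r`. By dominated convergence for infinite products each of
them tends to `1`, so `E → 1`.
-/

open Complex Filter

/-- The infinite `q`-Pochhammer symbol `(a;q)_∞ = ∏_{n≥0} (1 - a qⁿ)`. -/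
noncomputable def qPoch (a p : ℂ) : ℂ := ∏' n : ℕ, (1 - a * p ^ n)

/-- The modified elliptic gamma function `G(u;ω)` as a double infinite product, with
`q = e^{2πi ω1/ω2}`, `p = e^{2πi ω3/ω2}`, `r = e^{2πi ω3/ω1}`, `q̃ = e^{-2πi ω2/ω1}`. -/
noncomputable def Gprod (ω1 ω2 ω3 u : ℂ) : ℂ :=
  ∏' jk : ℕ × ℕ,
    ((1 - exp (-(2*(Real.pi:ℂ)*I*u)/ω2) * exp (2*(Real.pi:ℂ)*I*ω1/ω2) ^ (jk.1 + 1) *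
          exp (2*(Real.pi:ℂ)*I*ω3/ω2) ^ (jk.2 + 1)) *
     (1 - exp (2*(Real.pi:ℂ)*I*u/ω1) * exp (-(2*(Real.pi:ℂ)*I*ω2)/ω1) ^ (jk.1 + 1) *
          exp (2*(Real.pi:ℂ)*I*ω3/ω1) ^ jk.2)) /
    ((1 - exp (2*(Real.pi:ℂ)*I*u/ω2) * exp (2*(Real.pi:ℂ)*I*ω1/ω2) ^ jk.1 *
          exp (2*(Real.pi:ℂ)*I*ω3/ω2) ^ jk.2) *
     (1 - exp (-(2*(Real.pi:ℂ)*I*u)/ω1) * exp (-(2*(Real.pi:ℂ)*I*ω2)/ω1) ^ jk.1 *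
          exp (2*(Real.pi:ℂ)*I*ω3/ω1) ^ (jk.2 + 1)))

/-- The double sine function
`S(u;ω1,ω2) = (e^{2πi u/ω2}; q)_∞ / (e^{2πi u/ω1} q̃; q̃)_∞`. -/
noncomputable def dsine (ω1 ω2 u : ℂ) : ℂ :=
  qPoch (exp (2*(Real.pi:ℂ)*I*u/ω2)) (exp (2*(Real.pi:ℂ)*I*ω1/ω2)) /
  qPoch (exp (2*(Real.pi:ℂ)*I*u/ω1) * exp (-(2*(Real.pi:ℂ)*I*ω2)/ω1))
    (exp (-(2*(Real.pi:ℂ)*I*ω2)/ω1))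

open Topology

lemma multipliable_one_sub_of_summable {ι R : Type*} [NormedCommRing R] [NormOneClass R]
    [CompleteSpace R] {f : ι → R} (hf : Summable fun i => ‖f i‖) :
    Multipliable fun i => 1 - f i := by
  simpa [sub_eq_add_neg] using multipliable_one_add_of_summable (f := fun i => -f i) (by simpa)

noncomputable def qPoch₂ (a x y : ℂ) : ℂ := ∏' jk : ℕ × ℕ, (1 - a * x ^ jk.1 * y ^ jk.2)

section
variable {a x y : ℂ}

lemma summable_norm_mul_pow (hx : ‖x‖ < 1) : Summable fun n : ℕ => ‖a * x ^ n‖ := by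
  simpa [norm_mul, norm_pow] using
    (summable_geometric_of_lt_one (norm_nonneg x) hx).mul_left ‖a‖

lemma summable_norm_mul_pow_pow (hx : ‖x‖ < 1) (hy : ‖y‖ < 1) :
    Summable fun jk : ℕ × ℕ => ‖a * x ^ jk.1 * y ^ jk.2‖ := by
  simpa [norm_mul, norm_pow, mul_assoc] using
    ((summable_geometric_of_lt_one (norm_nonneg x) hx).mul_of_nonneg
      (summable_geometric_of_lt_one (norm_nonneg y) hy) (fun _ => by positivity)
      (fun _ => by positivity)).mul_left ‖a‖

lemma multipliable_one_sub_mul_pow (hx : ‖x‖ < 1) : Multipliable fun n : ℕ => 1 - a * x ^ n :=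
  multipliable_one_sub_of_summable (summable_norm_mul_pow hx)

lemma hasProd_qPoch (hx : ‖x‖ < 1) : HasProd (fun n : ℕ => 1 - a * x ^ n) (qPoch a x) :=
  (multipliable_one_sub_mul_pow hx).hasProd

lemma hasProd_qPoch₂ (hx : ‖x‖ < 1) (hy : ‖y‖ < 1) :
    HasProd (fun jk : ℕ × ℕ => 1 - a * x ^ jk.1 * y ^ jk.2) (qPoch₂ a x y) :=
  (multipliable_one_sub_of_summable (summable_norm_mul_pow_pow hx hy)).hasProd

lemma qPoch_ne_zero (hx : ‖x‖ < 1) (ha : ∀ n : ℕ, a * x ^ n ≠ 1) : qPoch a x ≠ 0 := by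
  simpa [qPoch, sub_eq_add_neg] using tprod_one_add_ne_zero_of_summable (f := fun n => -(a * x ^ n))
    (fun n => by simpa [← sub_eq_add_neg, sub_eq_zero] using (ha n).symm)
    (by simpa using summable_norm_mul_pow hx)

lemma qPoch_eq_one_sub_mul_qPoch (hx : ‖x‖ < 1) : qPoch a x = (1 - a) * qPoch (a * x) x := by
  rw [qPoch, tprod_eq_zero_mul' ?_]
  · simp only [pow_zero, mul_one, pow_succ]
    exact congrArg _ (tprod_congr fun k => by ring)
  · exact (multipliable_one_sub_mul_pow (a := a * x) hx).congr fun n => by ring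

lemma qPoch₂_eq_qPoch_mul (hx : ‖x‖ < 1) (hy : ‖y‖ < 1) :
    qPoch₂ a x y = qPoch a x * qPoch₂ (a * y) x y := by
  have hrow (b : ℂ) (j : ℕ) : HasProd (fun k : ℕ => 1 - b * x ^ j * y ^ k) (qPoch (b * x ^ j) y) :=
    hasProd_qPoch hy
  have hsplit := (hasProd_qPoch (a := a) hx).mul
    ((hasProd_qPoch₂ (a := a * y) hx hy).prod_fiberwise (hrow _))
  refine ((hasProd_qPoch₂ hx hy).prod_fiberwise (hrow a)).unique ?_
  convert hsplit using 2 with j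
  rw [qPoch_eq_one_sub_mul_qPoch hy, mul_right_comm]
end

lemma tendsto_qPoch₂_nhds_one {α : Type*} {l : Filter α} {a y : α → ℂ} {x : ℂ} (hx : ‖x‖ < 1)
    (ha : Tendsto a l (𝓝 0)) (hy : Tendsto y l (𝓝 0)) :
    Tendsto (fun t => qPoch₂ (a t) x (y t)) l (𝓝 1) := by
  have hsum : Summable fun jk : ℕ × ℕ => ‖x‖ ^ jk.1 * (1 / 2 : ℝ) ^ jk.2 :=
    (summable_geometric_of_lt_one (norm_nonneg x) hx).mul_of_nonneg
      (summable_geometric_of_lt_one (by norm_num) (by norm_num)) (fun _ => by positivity)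
      (fun _ => by positivity)
  have hlim (jk : ℕ × ℕ) :
      Tendsto (fun t => -(a t * x ^ jk.1 * y t ^ jk.2)) l (𝓝 0) := by
    simpa using ((ha.mul_const (x ^ jk.1)).mul (hy.pow jk.2)).neg
  have hbound : ∀ᶠ t in l, ∀ jk : ℕ × ℕ,
      ‖-(a t * x ^ jk.1 * y t ^ jk.2)‖ ≤ ‖x‖ ^ jk.1 * (1 / 2 : ℝ) ^ jk.2 := by
    filter_upwards
      [(tendsto_zero_iff_norm_tendsto_zero.1 ha).eventually (eventually_le_nhds one_pos),
      (tendsto_zero_iff_norm_tendsto_zero.1 hy).eventually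
        (eventually_le_nhds (by norm_num : (0 : ℝ) < 1 / 2))] with t hat hyt jk
    rw [norm_neg, norm_mul, norm_mul, norm_pow, norm_pow]
    calc ‖a t‖ * ‖x‖ ^ jk.1 * ‖y t‖ ^ jk.2 ≤ 1 * ‖x‖ ^ jk.1 * (1 / 2) ^ jk.2 := by gcongr
      _ = ‖x‖ ^ jk.1 * (1 / 2) ^ jk.2 := by rw [one_mul]
  simpa [qPoch₂, sub_eq_add_neg] using
    tendsto_tprod_one_add_of_dominated_convergence (g := 0) hsum hlim hbound

lemma tprod_ratio_eq_qPoch₂ {A Q B T C D p r : ℂ} (hQ : ‖Q‖ < 1) (hT : ‖T‖ < 1) (hp : ‖p‖ < 1)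
    (hr : ‖r‖ < 1) (hne : qPoch₂ C Q p * qPoch₂ (D * r) T r ≠ 0) :
    ∏' jk : ℕ × ℕ,
        ((1 - A * Q ^ (jk.1 + 1) * p ^ (jk.2 + 1)) * (1 - B * T ^ (jk.1 + 1) * r ^ jk.2)) /
          ((1 - C * Q ^ jk.1 * p ^ jk.2) * (1 - D * T ^ jk.1 * r ^ (jk.2 + 1))) =
      qPoch₂ (A * Q * p) Q p * qPoch₂ (B * T) T r / (qPoch₂ C Q p * qPoch₂ (D * r) T r) := by
  have hA := (hasProd_qPoch₂ (a := A * Q * p) hQ hp).congr_fun fun jk =>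
    show 1 - A * Q ^ (jk.1 + 1) * p ^ (jk.2 + 1) = _ by ring
  have hB := (hasProd_qPoch₂ (a := B * T) hT hr).congr_fun fun jk =>
    show 1 - B * T ^ (jk.1 + 1) * r ^ jk.2 = _ by ring
  have hD := (hasProd_qPoch₂ (a := D * r) hT hr).congr_fun fun jk =>
    show 1 - D * T ^ jk.1 * r ^ (jk.2 + 1) = _ by ring
  exact ((hA.mul hB).div₀ ((hasProd_qPoch₂ hQ hp).mul hD) hne).tprod_eq

lemma tendsto_inv_tprod_ratio {α : Type*} {l : Filter α} {A Q B T C D : ℂ} {p r : α → ℂ}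
    (hQ : ‖Q‖ < 1) (hT : ‖T‖ < 1) (hp : Tendsto p l (𝓝 0)) (hr : Tendsto r l (𝓝 0))
    (hC : ∀ n : ℕ, C * Q ^ n ≠ 1) :
    Tendsto (fun t => (∏' jk : ℕ × ℕ,
        ((1 - A * Q ^ (jk.1 + 1) * p t ^ (jk.2 + 1)) * (1 - B * T ^ (jk.1 + 1) * r t ^ jk.2)) /
          ((1 - C * Q ^ jk.1 * p t ^ jk.2) * (1 - D * T ^ jk.1 * r t ^ (jk.2 + 1))))⁻¹)
      l (𝓝 (qPoch C Q / qPoch (B * T) T)) := by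
  have hA := tendsto_qPoch₂_nhds_one hQ (by simpa using (tendsto_const_nhds (x := A * Q)).mul hp) hp
  have hB := tendsto_qPoch₂_nhds_one hT (by simpa using (tendsto_const_nhds (x := B * T)).mul hr) hr
  have hC' := tendsto_qPoch₂_nhds_one hQ (by simpa using (tendsto_const_nhds (x := C)).mul hp) hp
  have hD := tendsto_qPoch₂_nhds_one hT (by simpa using (tendsto_const_nhds (x := D)).mul hr) hr
  have hE : Tendsto (fun t => qPoch C Q / qPoch (B * T) T *
      (qPoch₂ (C * p t) Q (p t) * qPoch₂ (D * r t) T (r t) /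
        (qPoch₂ (A * Q * p t) Q (p t) * qPoch₂ (B * T * r t) T (r t))))
      l (𝓝 (qPoch C Q / qPoch (B * T) T)) := by
    simpa using ((hC'.mul hD).div (hA.mul hB) (by norm_num)).const_mul (qPoch C Q / qPoch (B * T) T)
  refine hE.congr' ?_
  filter_upwards [hp.eventually (Metric.ball_mem_nhds 0 one_pos),
    hr.eventually (Metric.ball_mem_nhds 0 one_pos), hC'.eventually_ne one_ne_zero,
    hD.eventually_ne one_ne_zero] with t hpt hrt hC0 hD0
  rw [dist_zero_right] at hpt hrt
  have hC2 := qPoch₂_eq_qPoch_mul (a := C) hQ hpt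
  have hden : qPoch₂ C Q (p t) * qPoch₂ (D * r t) T (r t) ≠ 0 := by
    rw [hC2]
    exact mul_ne_zero (mul_ne_zero (qPoch_ne_zero hQ hC) hC0) hD0
  rw [tprod_ratio_eq_qPoch₂ hQ hT hpt hrt hden, qPoch₂_eq_qPoch_mul (a := B * T) hT hrt, hC2,
    inv_div]
  -- an identity also when `qPoch (B * T) T = 0`, both sides being `0` then
  ring

lemma re_two_pi_I_mul_div (z w : ℂ) :
    (2 * (Real.pi : ℂ) * I * z / w).re = -(2 * Real.pi * (z / w).im) := by
  rw [mul_div_assoc]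
  simp

lemma norm_exp_two_pi_I_mul_div_lt_one {z w : ℂ} (h : 0 < (z / w).im) :
    ‖exp (2 * (Real.pi : ℂ) * I * z / w)‖ < 1 := by
  rw [norm_exp, Real.exp_lt_one_iff, re_two_pi_I_mul_div, neg_lt_zero]
  positivity

lemma norm_exp_neg_two_pi_I_mul_div_lt_one {z w : ℂ} (h : (z / w).im < 0) :
    ‖exp (-(2 * (Real.pi : ℂ) * I * z) / w)‖ < 1 := by
  rw [show -(2 * (Real.pi : ℂ) * I * z) / w = 2 * Real.pi * I * (-z) / w by ring]
  exact norm_exp_two_pi_I_mul_div_lt_one (by simpa [neg_div] using h)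

lemma tendsto_exp_two_pi_I_mul_div {α : Type*} {l : Filter α} {f : α → ℂ} (w : ℂ)
    (h : Tendsto (fun t => (f t / w).im) l atTop) :
    Tendsto (fun t => exp (2 * (Real.pi : ℂ) * I * f t / w)) l (𝓝 0) := by
  rw [tendsto_exp_nhds_zero_iff]
  simp_rw [re_two_pi_I_mul_div]
  exact tendsto_neg_atTop_atBot.comp (h.const_mul_atTop (by positivity))

lemma im_inv_neg_of_im_pos {z : ℂ} (h : 0 < z.im) : z⁻¹.im < 0 := by
  rw [inv_im, neg_div, neg_lt_zero]
  exact div_pos h (normSq_pos.2 fun hz => by simp [hz] at h)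

theorem stmt9_general (ω1 ω2 : ℂ) (h12 : 0 < (ω1/ω2).im) (u : ℂ)
    -- `e^{2πi u/ω2} ∉ {q^{-j} : j ≥ 0}` :
    (hu1 : ∀ j : ℕ, exp (2*(Real.pi:ℂ)*I*u/ω2) * exp (2*(Real.pi:ℂ)*I*ω1/ω2) ^ j ≠ 1) :
    Tendsto (fun ω3 : ℂ => (Gprod ω1 ω2 ω3 u)⁻¹)
      (comap (fun ω3 : ℂ => (ω3/ω1).im) atTop ⊓ comap (fun ω3 : ℂ => (ω3/ω2).im) atTop)
      (nhds (dsine ω1 ω2 u)) := by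
  have h21 : (ω2 / ω1).im < 0 := inv_div ω1 ω2 ▸ im_inv_neg_of_im_pos h12
  exact tendsto_inv_tprod_ratio (norm_exp_two_pi_I_mul_div_lt_one h12)
    (norm_exp_neg_two_pi_I_mul_div_lt_one h21)
    (tendsto_exp_two_pi_I_mul_div ω2 (tendsto_comap.mono_left inf_le_right))
    (tendsto_exp_two_pi_I_mul_div ω1 (tendsto_comap.mono_left inf_le_left)) hu1

/-- As `ω3 → ∞` with `Im(ω3/ω1) → +∞` and `Im(ω3/ω2) → +∞`, the reciprocal of the modified
elliptic gamma function tends to the double sine function. -/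
theorem stmt9 (ω1 ω2 : ℂ) (hω1 : ω1 ≠ 0) (hω2 : ω2 ≠ 0) (h12 : 0 < (ω1/ω2).im) (u : ℂ)
    -- `e^{2πi u/ω2} ∉ {q^{-j} : j ≥ 0}` :
    (hu1 : ∀ j : ℕ, exp (2*(Real.pi:ℂ)*I*u/ω2) * exp (2*(Real.pi:ℂ)*I*ω1/ω2) ^ j ≠ 1)
    -- `e^{-2πi u/ω1} ∉ {q̃^{-j} r^{-k-1}}`, eventually along the limiting process :
    (hu2 : ∀ᶠ ω3 in
        comap (fun ω3 : ℂ => (ω3/ω1).im) atTop ⊓ comap (fun ω3 : ℂ => (ω3/ω2).im) atTop,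
      ∀ j k : ℕ,
        exp (-(2*(Real.pi:ℂ)*I*u)/ω1) * exp (-(2*(Real.pi:ℂ)*I*ω2)/ω1) ^ j *
          exp (2*(Real.pi:ℂ)*I*ω3/ω1) ^ (k + 1) ≠ 1) :
    Tendsto (fun ω3 : ℂ => (Gprod ω1 ω2 ω3 u)⁻¹)
      (comap (fun ω3 : ℂ => (ω3/ω1).im) atTop ⊓ comap (fun ω3 : ℂ => (ω3/ω2).im) atTop)
      (nhds (dsine ω1 ω2 u)) :=
  stmt9_general ω1 ω2 h12 u hu1
end

section
/- Let N ≥ 1, let t, t_0, t_1, t_2 ∈ ℂ, and let z_1,…,z_N ∈ ℂ∖{0} satisfy z_j^2 ≠ 1 for all j and z_j^{ν} z_k^{μ} ≠ 1 for all j < k and all signs ν, μ ∈ {±1} (so that no denominator below vanishes). Then Σ_{ν ∈ {±1}^N} ∏_{1 ≤ j < k ≤ N} (1 − t z_j^{ν_j} z_k^{ν_k})/(1 − z_j^{ν_j} z_k^{ν_k}) · ∏_{j=1}^N (1 − t^{N−1} t_0 t_1 t_2 z_j^{−ν_j}) (1 − t_0 z_j^{ν_j})(1 − t_1 z_j^{ν_j})(1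 − t_2 z_j^{ν_j}) / (1 − z_j^{2ν_j}) = ∏_{j=1}^N (1 − t^{j−1} t_0 t_1)(1 − t^{j−1} t_0 t_2)(1 − t^{j−1} t_1 t_2). -/
/-- The sign exponent attached to a Boolean: `+1` or `-1`. -/
def sgn (b : Bool) : ℤ := if b then 1 else -1

open Finset Polynomial

/-!
Induction on `n`, by interpolation in `t₀`. For fixed `t, t₁, t₂` both sides are polynomials of
degree `≤ 2n` in `t₀`. At a node `t₀ = z_m^{±1}` every term with the opposite sign at `m` vanishes
(it contains the factor `1 - t₀ z_m^{∓1} = 0`); in the surviving terms the pair factors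
`(1 - t z_m^{±1} z_k^{ν_k})/(1 - z_m^{±1} z_k^{ν_k})` merge with the site factors at `k ≠ m`,
leaving the sum in the other `n - 1` variables with `t₀` replaced by `t t₀`, to which the
induction hypothesis applies. The `2n` nodes together with `t₀ = 0` determine the polynomial, and
the value at `t₀ = 0` is obtained in the same way: there the sum is symmetric in `t₀, t₁` and has
degree `≤ n` in `t₁`.
-/

section PolyFn

variable {R : Type*} [CommRing R]

def IsPolyFnLE (d : ℕ) (f : R → R) : Prop :=
  ∃ p : R[X], p.natDegree ≤ d ∧ ∀ x, p.eval x = f x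

namespace IsPolyFnLE

variable {d e : ℕ} {f g : R → R}

lemma congr (hf : IsPolyFnLE d f) (hfg : ∀ x, f x = g x) : IsPolyFnLE d g := by
  obtain ⟨p, hp, hpf⟩ := hf
  exact ⟨p, hp, fun x => (hpf x).trans (hfg x)⟩

lemma const (c : R) : IsPolyFnLE 0 fun _ => c :=
  ⟨C c, by simp, fun _ => eval_C⟩

lemma affine (a b : R) : IsPolyFnLE 1 fun x => a + b * x :=
  ⟨C b * X + C a, natDegree_linear_le, fun _ => by simp [add_comm]⟩

lemma const_mul (c : R) (hf : IsPolyFnLE d f) : IsPolyFnLE d fun x => c * f x := by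
  obtain ⟨p, hp, hpf⟩ := hf
  exact ⟨C c * p, (natDegree_C_mul_le c p).trans hp, fun x => by simp [hpf]⟩

lemma mul (hf : IsPolyFnLE d f) (hg : IsPolyFnLE e g) : IsPolyFnLE (d + e) fun x => f x * g x := by
  obtain ⟨p, hp, hpf⟩ := hf
  obtain ⟨q, hq, hqg⟩ := hg
  exact ⟨p * q, natDegree_mul_le.trans (add_le_add hp hq), fun x => by simp [hpf, hqg]⟩

lemma sum {ι : Type*} (s : Finset ι) {f : ι → R → R} (hf : ∀ i ∈ s, IsPolyFnLE d (f i)) :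
    IsPolyFnLE d fun x => ∑ i ∈ s, f i x := by
  choose p hp hpf using hf
  refine ⟨∑ i ∈ s.attach, p i i.2, natDegree_sum_le_of_forall_le _ _ fun i _ => hp i i.2,
    fun x => ?_⟩
  dsimp only
  rw [eval_finsetSum, ← Finset.sum_attach s]
  exact Finset.sum_congr rfl fun i _ => hpf i i.2 x

lemma prod {ι : Type*} (s : Finset ι) {f : ι → R → R} (hf : ∀ i ∈ s, IsPolyFnLE d (f i)) :
    IsPolyFnLE (#s * d) fun x => ∏ i ∈ s, f i x := by
  induction s using Finset.cons_induction with
  | empty => simpa using const 1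
  | cons i s hi ih =>
    rw [card_cons, add_mul, one_mul, add_comm]
    simp only [prod_cons]
    exact (hf i (mem_cons_self i s)).mul (ih fun j hj => hf j (mem_cons_of_mem hj))

lemma eq_of_lt_card [IsDomain R] (hf : IsPolyFnLE d f) (hg : IsPolyFnLE d g)
    {ι : Type*} [Fintype ι] {x : ι → R} (hx : Function.Injective x) (hd : d < Fintype.card ι)
    (h : ∀ i, f (x i) = g (x i)) : f = g := by
  obtain ⟨p, hp, hpf⟩ := hf
  obtain ⟨q, hq, hqg⟩ := hg
  have hpq : p = q := eq_of_natDegree_lt_card_of_eval_eq p q hx (fun i => by rw [hpf, hqg, h])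
    ((max_le hp hq).trans_lt hd)
  funext y
  rw [← hpf, ← hqg, hpq]

end IsPolyFnLE

end PolyFn

section PairwiseProd

variable {M α : Type*} [CommMonoid M]

def pairwiseProd {n : ℕ} (F : α → α → M) (y : Fin n → α) : M :=
  ∏ j, ∏ k, if j < k then F (y j) (y k) else 1

lemma pairwiseProd_succAbove {n : ℕ} {F : α → α → M} (hF : ∀ u v, F u v = F v u)
    (y : Fin (n + 1) → α) (m : Fin (n + 1)) :
    pairwiseProd F y = pairwiseProd F (y ∘ m.succAbove) * ∏ j, F (y m) (y (m.succAbove j)) := by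
  have hrow : ∀ j : Fin n, (∏ k, if m.succAbove j < k then F (y (m.succAbove j)) (y k) else 1)
      = (if m.succAbove j < m then F (y m) (y (m.succAbove j)) else 1) *
        ∏ k : Fin n, if j < k then F (y (m.succAbove j)) (y (m.succAbove k)) else 1 := by
    intro j
    simp only [Fin.prod_univ_succAbove _ m, Fin.succAbove_lt_succAbove_iff, hF (y m)]
  have hcol : ∀ j : Fin n, (if m.succAbove j < m then F (y m) (y (m.succAbove j)) else 1) *
      (if m < m.succAbove j then F (y m) (y (m.succAbove j)) else 1) = F (y m) (y (m.succAbove j))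
      := by
    intro j
    rcases (Fin.succAbove_ne m j).lt_or_gt with h | h <;> simp [h, h.not_gt]
  rw [pairwiseProd, Fin.prod_univ_succAbove _ m, Fin.prod_univ_succAbove _ m]
  simp only [hrow, lt_irrefl, if_false, one_mul, prod_mul_distrib]
  rw [pairwiseProd, ← prod_congr rfl fun j _ => hcol j, prod_mul_distrib]
  simp only [Function.comp_apply]
  ac_rfl

end PairwiseProd

section Signs

lemma sgn_eq_one_or_neg_one (b : Bool) : sgn b = 1 ∨ sgn b = -1 := by
  cases b <;> simp [sgn]

lemma zpow_sgn_not {G : Type*} [DivisionMonoid G] (x : G) (b : Bool) :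
    x ^ sgn (!b) = (x ^ sgn b)⁻¹ := by
  cases b <;> simp [sgn]

lemma zpow_sgn_sq {G : Type*} [DivisionMonoid G] (x : G) (b : Bool) :
    (x ^ sgn b) ^ 2 = x ^ (2 * sgn b) := by
  rw [mul_comm, zpow_mul]
  norm_cast

variable {K : Type*} [Field K]

lemma eq_of_zpow_sgn_eq {x : K} (hx : x ≠ 0) (hx2 : x ^ 2 ≠ 1) {b c : Bool}
    (h : x ^ sgn b = x ^ sgn c) : b = c := by
  cases b <;> cases c <;> simp [sgn] at h ⊢ <;> apply hx2 <;> field_simp at h <;> grind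

end Signs

namespace BCSum

variable {K : Type*} [Field K]

/-- The interpolation nodes `0` and `z j ^ (±1)` are pairwise distinct. -/
def IsGeneric {n : ℕ} (z : Fin n → K) : Prop :=
  Function.Injective fun o : Option (Fin n × Bool) => o.elim 0 fun q => z q.1 ^ sgn q.2

section Generic

variable {n : ℕ} {z : Fin n → K}

lemma isGeneric_of_mul_ne_one (hz0 : ∀ j, z j ≠ 0) (hz1 : ∀ j, z j ^ 2 ≠ 1)
    (hz2 : ∀ j k, j < k → ∀ b c, z j ^ sgn b * z k ^ sgn c ≠ 1) : IsGeneric z := by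
  have hne : ∀ j k b c, j < k → z j ^ sgn b ≠ z k ^ sgn c := fun j k b c hjk h =>
    hz2 j k hjk b (!c) (by rw [h, zpow_sgn_not, mul_inv_cancel₀ (zpow_ne_zero _ (hz0 k))])
  rintro (_ | ⟨j, b⟩) (_ | ⟨k, c⟩) h <;> simp only [Option.elim] at h
  · rfl
  · exact absurd h.symm (zpow_ne_zero _ (hz0 k))
  · exact absurd h (zpow_ne_zero _ (hz0 j))
  · rcases lt_trichotomy j k with hjk | rfl | hjk
    · exact absurd h (hne j k b c hjk)
    · rw [eq_of_zpow_sgn_eq (hz0 j) (hz1 j) h]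
    · exact absurd h.symm (hne k j c b hjk)

lemma IsGeneric.zpow_sgn_ne_zero (hz : IsGeneric z) (j : Fin n) (b : Bool) : z j ^ sgn b ≠ 0 :=
  hz.ne (a₁ := some (j, b)) (a₂ := none) (by simp)

lemma IsGeneric.mul_ne_one (hz : IsGeneric z) {j k : Fin n} {b c : Bool} (h : j ≠ k ∨ b = c) :
    z j ^ sgn b * z k ^ sgn c ≠ 1 := by
  intro h1
  have heq : z k ^ sgn c = z j ^ sgn (!b) := by
    rw [zpow_sgn_not, eq_inv_of_mul_eq_one_right h1]
  have hkc := hz (a₁ := some (k, c)) (a₂ := some (j, !b)) heq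
  simp only [Option.some.injEq, Prod.mk.injEq] at hkc
  rcases h with h | rfl
  · exact h hkc.1.symm
  · cases b <;> simp at hkc

lemma IsGeneric.comp_succAbove {z : Fin (n + 1) → K} (hz : IsGeneric z) (m : Fin (n + 1)) :
    IsGeneric (z ∘ m.succAbove) := by
  have hmap := Option.map_injective (Fin.succAbove_right_injective (p := m).prodMap
    (Function.injective_id (α := Bool)))
  unfold IsGeneric
  convert hz.comp hmap using 1
  funext o
  cases o <;> rfl

end Generic

def pairFactor (t u v : K) : K := (1 - t * u * v) / (1 - u * v)

def siteFactor (a b c d u : K) : K :=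
  (1 - a * u⁻¹) * (1 - b * u) * (1 - c * u) * (1 - d * u) / (1 - u ^ 2)

/-- The parameter `a = t ^ (n - 1) * t0 * t1 * t2` is kept apart from `t0`, since the reduction
step replaces `t0` by `t * t0` while `a` stays fixed. -/
def bcTerm {n : ℕ} (t a t0 t1 t2 : K) (y : Fin n → K) : K :=
  pairwiseProd (pairFactor t) y * ∏ j, siteFactor a t0 t1 t2 (y j)

def bcSum (n : ℕ) (t t0 t1 t2 : K) (z : Fin n → K) : K :=
  ∑ ν : Fin n → Bool, bcTerm t (t ^ (n - 1) * t0 * t1 * t2) t0 t1 t2 fun j => z j ^ sgn (ν j)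

def bcProd (n : ℕ) (t t0 t1 t2 : K) : K :=
  ∏ j ∈ range n, (1 - t ^ j * t0 * t1) * (1 - t ^ j * t0 * t2) * (1 - t ^ j * t1 * t2)

lemma siteFactor_eq_zero (a c d : K) {b u : K} (h : b * u = 1) : siteFactor a b c d u = 0 := by
  simp [siteFactor, h]

lemma siteFactor_self (c t1 t2 : K) {s : K} (hs : s ≠ 0) (hs2 : s ^ 2 ≠ 1) :
    siteFactor (c * s) s t1 t2 s = (1 - c) * (1 - t1 * s) * (1 - t2 * s) := by
  have : 1 - s ^ 2 ≠ 0 := sub_ne_zero.2 (Ne.symm hs2)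
  rw [siteFactor]
  field_simp

lemma pairFactor_mul_siteFactor (t a c d : K) {s u : K} (hu : u ≠ 0) (hsu : s * u ≠ 1) :
    pairFactor t s u * siteFactor a s c d u = siteFactor a (t * s) c d u := by
  have : 1 - s * u ≠ 0 := sub_ne_zero.2 (Ne.symm hsu)
  rw [pairFactor, siteFactor, siteFactor]
  field_simp

lemma bcTerm_eq_zero {n : ℕ} (t a s t1 t2 : K) {y : Fin n → K} {m : Fin n} (h : s * y m = 1) :
    bcTerm t a s t1 t2 y = 0 :=
  mul_eq_zero_of_right _ (prod_eq_zero (mem_univ m) (siteFactor_eq_zero a t1 t2 h))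

lemma bcTerm_succAbove {n : ℕ} (t c t1 t2 : K) {s : K} (y : Fin (n + 1) → K) (m : Fin (n + 1))
    (hm : y m = s) (hs0 : s ≠ 0) (hs2 : s ^ 2 ≠ 1) (hy0 : ∀ j, y (m.succAbove j) ≠ 0)
    (hsy : ∀ j, s * y (m.succAbove j) ≠ 1) :
    bcTerm t (c * s) s t1 t2 y = (1 - c) * (1 - t1 * s) * (1 - t2 * s) *
      bcTerm t (c * s) (t * s) t1 t2 (y ∘ m.succAbove) := by
  subst hm
  rw [bcTerm, bcTerm, pairwiseProd_succAbove (fun u v => by simp only [pairFactor]; ring) y m,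
    Fin.prod_univ_succAbove _ m, siteFactor_self c t1 t2 hs0 hs2]
  have hmerge : (∏ j, pairFactor t (y m) (y (m.succAbove j))) *
      ∏ j, siteFactor (c * y m) (y m) t1 t2 (y (m.succAbove j))
      = ∏ j, siteFactor (c * y m) (t * y m) t1 t2 ((y ∘ m.succAbove) j) := by
    rw [← prod_mul_distrib]
    exact prod_congr rfl fun j _ => pairFactor_mul_siteFactor t _ t1 t2 (hy0 j) (hsy j)
  rw [← hmerge]
  ring

lemma bcProd_succ (n : ℕ) (t s t1 t2 : K) :
    bcProd (n + 1) t s t1 t2 =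
      (1 - t ^ n * t1 * t2) * (1 - t1 * s) * (1 - t2 * s) * bcProd n t (t * s) t1 t2 := by
  induction n with
  | zero => simp [bcProd]; ring
  | succ n ih =>
    rw [bcProd, prod_range_succ, ← bcProd, ih, bcProd, bcProd, prod_range_succ]
    ring

lemma bcSum_comm01 (n : ℕ) (t t0 t1 t2 : K) (z : Fin n → K) :
    bcSum n t t0 t1 t2 z = bcSum n t t1 t0 t2 z := by
  simp only [bcSum, bcTerm, siteFactor]
  ring_nf

lemma bcProd_comm01 (n : ℕ) (t t0 t1 t2 : K) : bcProd n t t0 t1 t2 = bcProd n t t1 t0 t2 :=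
  prod_congr rfl fun _ _ => by ring

lemma bcSum_succ_at_node {n : ℕ} (t t1 t2 : K) {z : Fin (n + 1) → K} (hz : IsGeneric z)
    (m : Fin (n + 1)) (b : Bool) :
    bcSum (n + 1) t (z m ^ sgn b) t1 t2 z = (1 - t ^ n * t1 * t2) * (1 - t1 * z m ^ sgn b) *
      (1 - t2 * z m ^ sgn b) * bcSum n t (t * z m ^ sgn b) t1 t2 (z ∘ m.succAbove) := by
  set s := z m ^ sgn b
  have hs0 : s ≠ 0 := hz.zpow_sgn_ne_zero m b
  have hs2 : s ^ 2 ≠ 1 := sq s ▸ hz.mul_ne_one (Or.inr rfl)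
  rw [bcSum, ← (Fin.insertNthEquiv (fun _ => Bool) m).sum_comp, Fintype.sum_prod_type,
    Fintype.sum_eq_single b, bcSum, mul_sum]
  · refine sum_congr rfl fun ν _ => ?_
    have hc : t ^ (n + 1 - 1) * s * t1 * t2 = t ^ n * t1 * t2 * s := by
      rw [Nat.add_sub_cancel]; ring
    have hsucc : ∀ j, (z ∘ m.succAbove) j ^ sgn (ν j)
        = z (m.succAbove j) ^ sgn (m.insertNth (α := fun _ => Bool) b ν (m.succAbove j)) := by
      simp [Fin.insertNth_apply_succAbove]
    -- `n - 1` is truncated subtraction, so this needs `Fin n` to be nonempty.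
    have hpos : ∀ j : Fin n, t ^ (n - 1) * (t * s) * t1 * t2 = t ^ n * t1 * t2 * s := fun j => by
      rw [← pow_sub_one_mul j.pos.ne' t]; ring
    simp only [Fin.insertNthEquiv_apply]
    rw [hc, bcTerm_succAbove t _ t1 t2 _ m (by simp [s]) hs0 hs2
      (fun j => hsucc j ▸ hz.zpow_sgn_ne_zero _ _)
      (fun j => hsucc j ▸ hz.mul_ne_one (Or.inl (m.succAbove_ne j).symm))]
    congr 1
    rw [show (fun j => z j ^ sgn (m.insertNth (α := fun _ => Bool) b ν j)) ∘ m.succAbove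
        = fun j => (z ∘ m.succAbove) j ^ sgn (ν j) from funext fun j => (hsucc j).symm, bcTerm,
      bcTerm]
    exact congrArg _ (prod_congr rfl fun j _ => by rw [hpos j])
  · intro b' hb'
    refine sum_eq_zero fun ν _ => bcTerm_eq_zero t _ s t1 t2 (m := m) ?_
    simp only [Fin.insertNthEquiv_apply, Fin.insertNth_apply_same, Bool.eq_not.mpr hb',
      zpow_sgn_not, s]
    exact mul_inv_cancel₀ hs0

lemma isPolyFnLE_bcSum_of_siteFactor {n d : ℕ} {t t1 t2 : K} (z : Fin n → K)
    (hsite : ∀ u, IsPolyFnLE d fun s => siteFactor (t ^ (n - 1) * s * t1 * t2) s t1 t2 u) :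
    IsPolyFnLE (n * d) fun s => bcSum n t s t1 t2 z := by
  refine IsPolyFnLE.sum univ fun ν _ => IsPolyFnLE.const_mul _ ?_
  simpa using IsPolyFnLE.prod univ fun j _ => hsite (z j ^ sgn (ν j))

lemma isPolyFnLE_bcSum (n : ℕ) (t t1 t2 : K) (z : Fin n → K) :
    IsPolyFnLE (n * 2) fun s => bcSum n t s t1 t2 z :=
  isPolyFnLE_bcSum_of_siteFactor z fun u =>
    (((IsPolyFnLE.affine 1 (-(t ^ (n - 1) * t1 * t2 * u⁻¹))).mul (IsPolyFnLE.affine 1 (-u))).mul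
      (IsPolyFnLE.const ((1 - t1 * u) * (1 - t2 * u) / (1 - u ^ 2)))).congr
      fun s => by simp only [siteFactor]; ring

lemma isPolyFnLE_bcSum_zero (n : ℕ) (t t2 : K) (z : Fin n → K) :
    IsPolyFnLE n fun s => bcSum n t s 0 t2 z := by
  simpa using isPolyFnLE_bcSum_of_siteFactor (d := 1) (t := t) (t1 := 0) (t2 := t2) z fun u =>
    ((IsPolyFnLE.affine 1 (-u)).mul (IsPolyFnLE.const ((1 - t2 * u) / (1 - u ^ 2)))).congr
      fun s => by simp only [siteFactor]; ring

lemma isPolyFnLE_bcProd (n : ℕ) (t t1 t2 : K) :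
    IsPolyFnLE (n * 2) fun s => bcProd n t s t1 t2 := by
  simpa [bcProd] using IsPolyFnLE.prod (range n) fun j _ =>
    (((IsPolyFnLE.affine 1 (-(t ^ j * t1))).mul (IsPolyFnLE.affine 1 (-(t ^ j * t2)))).mul
      (IsPolyFnLE.const (1 - t ^ j * t1 * t2))).congr fun s => by ring

lemma isPolyFnLE_bcProd_zero (n : ℕ) (t t2 : K) : IsPolyFnLE n fun s => bcProd n t s 0 t2 := by
  simpa [bcProd] using IsPolyFnLE.prod (range n) fun j _ =>
    (IsPolyFnLE.affine 1 (-(t ^ j * t2))).congr fun s => by ring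

theorem bcSum_eq_bcProd (n : ℕ) (t t0 t1 t2 : K) (z : Fin n → K) (hz : IsGeneric z) :
    bcSum n t t0 t1 t2 z = bcProd n t t0 t1 t2 := by
  induction n generalizing t0 t1 t2 with
  | zero => simp [bcSum, bcTerm, pairwiseProd, bcProd]
  | succ n ih =>
    have hnode : ∀ (q : Fin (n + 1) × Bool) (t1 t2 : K),
        bcSum (n + 1) t (z q.1 ^ sgn q.2) t1 t2 z = bcProd (n + 1) t (z q.1 ^ sgn q.2) t1 t2 := by
      rintro ⟨m, b⟩ t1 t2
      rw [bcSum_succ_at_node t t1 t2 hz m b, ih _ _ _ _ (hz.comp_succAbove m), bcProd_succ]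
    have hzero : ∀ t1 t2 : K, bcSum (n + 1) t 0 t1 t2 z = bcProd (n + 1) t 0 t1 t2 := by
      intro t1 t2
      rw [bcSum_comm01, bcProd_comm01]
      refine congrFun ((isPolyFnLE_bcSum_zero _ t t2 z).eq_of_lt_card
        (isPolyFnLE_bcProd_zero _ t t2) (hz.comp (Option.some_injective _)) (by simp)
        fun q => hnode q 0 t2) t1
    refine congrFun ((isPolyFnLE_bcSum _ t t1 t2 z).eq_of_lt_card (isPolyFnLE_bcProd _ t t1 t2) hz
      (by simp) ?_) t0
    rintro (_ | q)
    · exact hzero t1 t2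
    · exact hnode q t1 t2

end BCSum

theorem stmt14_general (N : ℕ) (t t0 t1 t2 : ℂ) (z : Fin N → ℂ)
    (hz0 : ∀ j, z j ≠ 0)
    (hz1 : ∀ j, (z j) ^ 2 ≠ 1)
    (hz2 : ∀ j k : Fin N, j < k → ∀ a b : ℤ, (a = 1 ∨ a = -1) → (b = 1 ∨ b = -1) →
      (z j) ^ a * (z k) ^ b ≠ 1) :
    (∑ ν : Fin N → Bool,
        (∏ j : Fin N, ∏ k : Fin N, if j < k then
            (1 - t * (z j) ^ sgn (ν j) * (z k) ^ sgn (ν k)) /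
              (1 - (z j) ^ sgn (ν j) * (z k) ^ sgn (ν k))
          else 1) *
        ∏ j : Fin N,
          (1 - t ^ (N - 1) * t0 * t1 * t2 * (z j) ^ (-sgn (ν j))) *
            (1 - t0 * (z j) ^ sgn (ν j)) * (1 - t1 * (z j) ^ sgn (ν j)) *
            (1 - t2 * (z j) ^ sgn (ν j)) / (1 - (z j) ^ (2 * sgn (ν j))))
      = ∏ j ∈ Finset.range N,
          (1 - t ^ j * t0 * t1) * (1 - t ^ j * t0 * t2) * (1 - t ^ j * t1 * t2) := by
  have hz : BCSum.IsGeneric z := BCSum.isGeneric_of_mul_ne_one hz0 hz1 fun j k hjk b c =>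
    hz2 j k hjk _ _ (sgn_eq_one_or_neg_one b) (sgn_eq_one_or_neg_one c)
  have h := BCSum.bcSum_eq_bcProd N t t0 t1 t2 z hz
  simp only [BCSum.bcSum, BCSum.bcTerm, pairwiseProd, BCSum.pairFactor, BCSum.siteFactor,
    BCSum.bcProd, ← zpow_neg, zpow_sgn_sq] at h
  exact h

/-- The `BC_N`-type terminating summation identity: the sum over all `2^N` sign vectors
`ν ∈ {±1}^N` of
`∏_{j<k} (1 - t z_j^{ν_j} z_k^{ν_k})/(1 - z_j^{ν_j} z_k^{ν_k}) ·
 ∏_j (1 - t^{N-1} t₀t₁t₂ z_j^{-ν_j})(1-t₀z_j^{ν_j})(1-t₁z_j^{ν_j})(1-t₂z_j^{ν_j})/(1-z_j^{2ν_j})`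
equals `∏_{j=1}^N (1-t^{j-1}t₀t₁)(1-t^{j-1}t₀t₂)(1-t^{j-1}t₁t₂)`;
in particular it is independent of `z₁,…,z_N`. -/
theorem stmt14 (N : ℕ) (hN : 1 ≤ N) (t t0 t1 t2 : ℂ) (z : Fin N → ℂ)
    (hz0 : ∀ j, z j ≠ 0)
    (hz1 : ∀ j, (z j) ^ 2 ≠ 1)
    (hz2 : ∀ j k : Fin N, j < k → ∀ a b : ℤ, (a = 1 ∨ a = -1) → (b = 1 ∨ b = -1) →
      (z j) ^ a * (z k) ^ b ≠ 1) :
    (∑ ν : Fin N → Bool,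
        (∏ j : Fin N, ∏ k : Fin N, if j < k then
            (1 - t * (z j) ^ sgn (ν j) * (z k) ^ sgn (ν k)) /
              (1 - (z j) ^ sgn (ν j) * (z k) ^ sgn (ν k))
          else 1) *
        ∏ j : Fin N,
          (1 - t ^ (N - 1) * t0 * t1 * t2 * (z j) ^ (-sgn (ν j))) *
            (1 - t0 * (z j) ^ sgn (ν j)) * (1 - t1 * (z j) ^ sgn (ν j)) *
            (1 - t2 * (z j) ^ sgn (ν j)) / (1 - (z j) ^ (2 * sgn (ν j))))
      = ∏ j ∈ Finset.range N,
          (1 - t ^ j * t0 * t1) * (1 - t ^ j * t0 * t2) * (1 - t ^ j * t1 * t2) :=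
  stmt14_general N t t0 t1 t2 z hz0 hz1 hz2
end
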